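/- Let t ≥ 1 be an integer and let P_t be the profile on the four alternatives {a, b, c, x} consisting of 78t votes: 32t votes a>b>c>x, 24t votes c>x>a>b, 20t votes b>c>x>a, and 2t votes c>b>a>x. If R is any profile of 78t votes obtained from P_t by changing fewer than t/6 of the votes, then a is the unique DQ winner of R and c is the unique Dodgson winner of R; in particular the DQ winner and Dodgson winner of R differ. -/

import Mathlib

open Finset Filter

/-- A vote (strict linear order) on `m` alternatives, encoded by its position map:
`v x` is the position of alternative `x`, position `0` being the top.
`v` ranks `x` above `y` iff `v x < v y`. -/
abbrev Vote (m : ℕ) := Equiv.Perm (Fin m)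

/-- A profile is a list of `n` votes, one per agent. -/
abbrev Profile (m n : ℕ) := Fin n → Vote m

/-- `n_{xy}[P]`: the number of votes in `P` ranking `x` above `y`. -/
def nAbove {m n : ℕ} (P : Profile m n) (x y : Fin m) : ℕ :=
  (Finset.univ.filter (fun i => P i x < P i y)).card

/-- `adv[P](x,y) = max (0, n_{xy} - n_{yx})` (truncated subtraction on `ℕ`). -/
def adv {m n : ℕ} (P : Profile m n) (x y : Fin m) : ℕ :=
  nAbove P x y - nAbove P y x

/-- The Tideman score `Sc_T[P](a) = Σ_{b ≠ a} adv[P](b,a)`. -/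
def ScT {m n : ℕ} (P : Profile m n) (a : Fin m) : ℕ :=
  ∑ b ∈ Finset.univ.filter (fun b => b ≠ a), adv P b a

/-- The Dodgson Quick score `Sc_Q[P](a) = Σ_{b ≠ a} ⌈adv[P](b,a)/2⌉`. -/
def ScQ {m n : ℕ} (P : Profile m n) (a : Fin m) : ℕ :=
  ∑ b ∈ Finset.univ.filter (fun b => b ≠ a), (adv P b a + 1) / 2

/-- `a` is a Condorcet-tie winner of `P` iff `adv[P](b,a) = 0` for all `b ≠ a`. -/
def CondorcetTieWinner {m n : ℕ} (P : Profile m n) (a : Fin m) : Prop :=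
  ∀ b, b ≠ a → adv P b a = 0

/-- `a` is a Condorcet winner of `P` iff `adv[P](a,b) > 0` for all `b ≠ a`. -/
def CondorcetWinner {m n : ℕ} (P : Profile m n) (a : Fin m) : Prop :=
  ∀ b, b ≠ a → 0 < adv P a b

/-- `w` is obtained from the vote `v` by one swap of neighbouring alternatives
(the alternatives at consecutive positions `p` and `p+1` are exchanged). -/
def AdjSwapVote {m : ℕ} (v w : Vote m) : Prop :=
  ∃ p q : Fin m, (q : ℕ) = (p : ℕ) + 1 ∧ w = v.trans (Equiv.swap p q)

/-- `Q` is obtained from the profile `P` by one adjacent swap in one vote. -/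
def AdjSwap {m n : ℕ} (P Q : Profile m n) : Prop :=
  ∃ i : Fin n, AdjSwapVote (P i) (Q i) ∧ ∀ j, j ≠ i → Q j = P j

/-- `Reach r k P Q`: `Q` can be obtained from `P` by exactly `k` steps of `r`. -/
def Reach {α : Type*} (r : α → α → Prop) : ℕ → α → α → Prop
  | 0, P, Q => P = Q
  | (k+1), P, Q => ∃ R, r P R ∧ Reach r k R Q

/-- The Dodgson score `Sc_D[P](a)`: the minimum number of adjacent swaps needed to
transform `P` into a profile in which `a` is a Condorcet-tie winner. -/
noncomputable def ScD {m n : ℕ} (P : Profile m n) (a : Fin m) : ℕ :=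
  sInf {k | ∃ Q, Reach AdjSwap k P Q ∧ CondorcetTieWinner Q a}

/-- Variant of the Dodgson score requiring `a` to become a Condorcet winner. -/
noncomputable def ScD' {m n : ℕ} (P : Profile m n) (a : Fin m) : ℕ :=
  sInf {k | ∃ Q, Reach AdjSwap k P Q ∧ CondorcetWinner Q a}

/- Voting situations: multisets of votes.  Scores depend only on the voting
situation of a profile, so we define them directly on multisets. -/

/-- Number of votes in the voting situation `S` ranking `x` above `y`. -/
def snAbove {m : ℕ} (S : Multiset (Vote m)) (x y : Fin m) : ℕ :=
  (S.filter (fun v => v x < v y)).card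

def sadv {m : ℕ} (S : Multiset (Vote m)) (x y : Fin m) : ℕ :=
  snAbove S x y - snAbove S y x

/-- Tideman score of a voting situation. -/
def sScT {m : ℕ} (S : Multiset (Vote m)) (a : Fin m) : ℕ :=
  ∑ b ∈ Finset.univ.filter (fun b => b ≠ a), sadv S b a

/-- Dodgson Quick score of a voting situation. -/
def sScQ {m : ℕ} (S : Multiset (Vote m)) (a : Fin m) : ℕ :=
  ∑ b ∈ Finset.univ.filter (fun b => b ≠ a), (sadv S b a + 1) / 2

def sCondorcetTieWinner {m : ℕ} (S : Multiset (Vote m)) (a : Fin m) : Prop :=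
  ∀ b, b ≠ a → sadv S b a = 0

/-- One adjacent swap applied to one vote of a voting situation. -/
def sAdjSwap {m : ℕ} (S T : Multiset (Vote m)) : Prop :=
  ∃ v ∈ S, ∃ w, AdjSwapVote v w ∧ T = w ::ₘ S.erase v

/-- Dodgson score of a voting situation. -/
noncomputable def sScD {m : ℕ} (S : Multiset (Vote m)) (a : Fin m) : ℕ :=
  sInf {k | ∃ T, Reach sAdjSwap k S T ∧ sCondorcetTieWinner T a}

/-- `a` is a Tideman winner (minimal Tideman score). -/
def sTWinner {m : ℕ} (S : Multiset (Vote m)) (a : Fin m) : Prop :=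
  ∀ b, sScT S a ≤ sScT S b

/-- `a` is a DQ winner (minimal DQ score). -/
def sQWinner {m : ℕ} (S : Multiset (Vote m)) (a : Fin m) : Prop :=
  ∀ b, sScQ S a ≤ sScQ S b

/-- `a` is a Dodgson winner (minimal Dodgson score). -/
def sDWinner {m : ℕ} (S : Multiset (Vote m)) (a : Fin m) : Prop :=
  ∀ b, sScD S a ≤ sScD S b

/-- The vote `a > b > c > x` on alternatives `a = 0`, `b = 1`, `c = 2`, `x = 3`. -/
def vof1 : Vote 4 := 1
/-- The vote `c > x > a > b` (positions: `c ↦ 0`, `x ↦ 1`, `a ↦ 2`, `b ↦ 3`). -/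
def vof2 : Vote 4 := (Equiv.swap 0 2).trans (Equiv.swap 1 3)
/-- The vote `b > c > x > a` (positions: `b ↦ 0`, `c ↦ 1`, `x ↦ 2`, `a ↦ 3`). -/
def vof3 : Vote 4 := (finRotate 4).symm
/-- The vote `c > b > a > x` (positions: `c ↦ 0`, `b ↦ 1`, `a ↦ 2`, `x ↦ 3`). -/
def vof4 : Vote 4 := Equiv.swap 0 2

/-- The profile `P_t` of `78t` votes: `32t` votes `a>b>c>x`, `24t` votes `c>x>a>b`,
`20t` votes `b>c>x>a` and `2t` votes `c>b>a>x`. -/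
def Pt (t : ℕ) : Profile 4 (78 * t) := fun i =>
  if (i : ℕ) < 32 * t then vof1
  else if (i : ℕ) < 56 * t then vof2
  else if (i : ℕ) < 76 * t then vof3
  else vof4

/-!
Changing `k < t/6` votes moves every pairwise count by at most `k`, hence every DQ score by
at most `3k`; the DQ scores of `P_t` are `12t, 17t, 13t, 54t`, so `a` stays the unique DQ winner.
An adjacent swap lowers a DQ score by at most one, so DQ scores bound Dodgson scores from below,
which disposes of `b` and `x`. Swapping `b` and `c` in `13t + k` unchanged votes `a > b > c > x`
makes `c` a Condorcet-tie winner, so `Sc_D(c) ≤ 13t + k`. For `a`, the potential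
`∑ min 2 (pos a - pos c)` drops by at most one per swap, is at least `92t - 2k` on `R`, and is at
most `78t` once `c` no longer beats `a`; hence `Sc_D(a) ≥ 14t - 2k > 13t + k`.
-/

namespace Reach

variable {α : Type*} {r : α → α → Prop}

theorem trans {k l : ℕ} {x y z : α} (hxy : Reach r k x y) (hyz : Reach r l y z) :
    Reach r (k + l) x z := by
  induction k generalizing x with
  | zero => cases hxy; simpa using hyz
  | succ k ih =>
    obtain ⟨w, hxw, hwy⟩ := hxy
    rw [Nat.add_right_comm]
    exact ⟨w, hxw, ih hwy⟩

theorem le_add {f : α → ℕ} (hf : ∀ x y, r x y → f x ≤ f y + 1) {k : ℕ} {x y : α}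
    (h : Reach r k x y) : f x ≤ f y + k := by
  induction k generalizing x with
  | zero => cases h; rfl
  | succ k ih =>
    obtain ⟨w, hxw, hwy⟩ := h
    have := hf x w hxw
    have := ih hwy
    omega

end Reach

theorem Finset.sum_le_sum_add_one {ι : Type*} {s : Finset ι} {f g : ι → ℕ} (i₀ : ι)
    (h : ∀ i ∈ s, i ≠ i₀ → f i ≤ g i) (h₀ : f i₀ ≤ g i₀ + 1) :
    ∑ i ∈ s, f i ≤ ∑ i ∈ s, g i + 1 := by
  classical
  calc ∑ i ∈ s, f i ≤ ∑ i ∈ s, (g i + if i = i₀ then 1 else 0) := by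
        refine Finset.sum_le_sum fun i hi => ?_
        by_cases hi₀ : i = i₀
        · subst hi₀; simpa using h₀
        · simpa [hi₀] using h i hi hi₀
    _ ≤ ∑ i ∈ s, g i + 1 := by
        rw [Finset.sum_add_distrib, Finset.sum_ite_eq']
        split_ifs <;> simp

theorem Finset.sum_le_sum_add_card_mul {ι : Type*} [Fintype ι] {f g : ι → ℕ} {B : ℕ}
    (hf : ∀ i, f i ≤ B) (W : Finset ι) (hW : ∀ i ∉ W, f i = g i) :
    ∑ i, f i ≤ ∑ i, g i + W.card * B := by
  classical
  have hWc : ∑ i ∈ Wᶜ, f i = ∑ i ∈ Wᶜ, g i :=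
    Finset.sum_congr rfl fun i hi => hW i (Finset.mem_compl.mp hi)
  calc ∑ i, f i = ∑ i ∈ W, f i + ∑ i ∈ Wᶜ, g i := by rw [← hWc, Finset.sum_add_sum_compl W f]
    _ ≤ W.card * B + ∑ i, g i := by
        gcongr
        · simpa using Finset.sum_le_card_nsmul W f B fun i _ => hf i
        · exact Finset.subset_univ _
    _ = ∑ i, g i + W.card * B := Nat.add_comm _ _

section Profiles

variable {m n : ℕ}

theorem nAbove_eq_sum (P : Profile m n) (x y : Fin m) :
    nAbove P x y = ∑ i, if P i x < P i y then 1 else 0 :=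
  Finset.card_filter _ _

theorem nAbove_le_nAbove_add_card {P R : Profile m n} (W : Finset (Fin n))
    (hW : ∀ i ∉ W, R i = P i) (x y : Fin m) : nAbove R x y ≤ nAbove P x y + W.card := by
  simpa [nAbove_eq_sum] using Finset.sum_le_sum_add_card_mul (B := 1)
    (f := fun i => if R i x < R i y then 1 else 0) (g := fun i => if P i x < P i y then 1 else 0)
    (fun i => by split_ifs <;> simp) W fun i hi => by simp only [hW i hi]

theorem nAbove_add_nAbove (P : Profile m n) {x y : Fin m} (hxy : x ≠ y) :
    nAbove P x y + nAbove P y x = n := by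
  have hyx : nAbove P y x = (Finset.univ.filter fun i => ¬ P i x < P i y).card := by
    refine congrArg Finset.card (Finset.filter_congr fun i _ => ?_)
    rw [not_lt]
    exact ⟨le_of_lt, fun h => lt_of_le_of_ne h ((P i).injective.ne hxy.symm)⟩
  rw [hyx, nAbove, Finset.card_filter_add_card_filter_not, Finset.card_univ, Fintype.card_fin]

theorem nAbove_add_card_mul {P Q : Profile m n} (F : Finset (Fin n)) {v w : Vote m}
    (hP : ∀ i ∈ F, P i = v) (hQ : ∀ i ∈ F, Q i = w) (hPQ : ∀ i ∉ F, Q i = P i) (x y : Fin m) :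
    nAbove Q x y + F.card * (if v x < v y then 1 else 0) =
      nAbove P x y + F.card * (if w x < w y then 1 else 0) := by
  have hF : ∀ (S : Profile m n) (u : Vote m), (∀ i ∈ F, S i = u) →
      ∑ i ∈ F, (if S i x < S i y then 1 else 0) = F.card * (if u x < u y then 1 else 0) :=
    fun S u hS => by
      rw [Finset.sum_congr rfl fun i hi => show (if S i x < S i y then 1 else 0) =
        (if u x < u y then 1 else 0) by rw [hS i hi], Finset.sum_const, smul_eq_mul]
  have hFc : ∑ i ∈ Fᶜ, (if Q i x < Q i y then 1 else 0) = ∑ i ∈ Fᶜ, if P i x < P i y then 1 else 0 :=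
    Finset.sum_congr rfl fun i hi => by rw [hPQ i (Finset.mem_compl.mp hi)]
  rw [nAbove_eq_sum, nAbove_eq_sum, ← Finset.sum_add_sum_compl F, hF Q w hQ, hFc,
    ← Finset.sum_add_sum_compl F, hF P v hP]
  ring

theorem adv_le_adv_add_card {P R : Profile m n} (W : Finset (Fin n))
    (hW : ∀ i ∉ W, R i = P i) (x y : Fin m) : adv R x y ≤ adv P x y + 2 * W.card := by
  have := nAbove_le_nAbove_add_card W hW x y
  have := nAbove_le_nAbove_add_card W (fun i hi => (hW i hi).symm) y x
  simp only [adv]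
  omega

theorem scQ_le_scQ_add_card {P R : Profile m n} (W : Finset (Fin n))
    (hW : ∀ i ∉ W, R i = P i) (a : Fin m) : ScQ R a ≤ ScQ P a + (m - 1) * W.card := by
  calc ScQ R a ≤ ∑ b ∈ Finset.univ.filter (fun b => b ≠ a), ((adv P b a + 1) / 2 + W.card) :=
        Finset.sum_le_sum fun b _ => by have := adv_le_adv_add_card W hW b a; omega
    _ = ScQ P a + (m - 1) * W.card := by
        rw [Finset.sum_add_distrib, Finset.sum_const, Finset.filter_ne', Finset.card_erase_of_mem
          (Finset.mem_univ a), Finset.card_univ, Fintype.card_fin, smul_eq_mul, ScQ,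
          Finset.filter_ne']

end Profiles

section AdjacentSwaps

variable {m n : ℕ}

theorem Fin.swap_lt_swap_iff {p q i j : Fin m} (hq : (q : ℕ) = p + 1)
    (h₁ : ¬(i = p ∧ j = q)) (h₂ : ¬(i = q ∧ j = p)) :
    Equiv.swap p q i < Equiv.swap p q j ↔ i < j := by
  simp only [Equiv.swap_apply_def, Fin.lt_def, Fin.ext_iff] at h₁ h₂ ⊢
  split_ifs <;> omega

theorem Fin.min_two_sub_le_swap {p q : Fin m} (hq : (q : ℕ) = p + 1) (i j : Fin m) :
    min 2 ((i : ℕ) - j) ≤ min 2 ((Equiv.swap p q i : ℕ) - Equiv.swap p q j) + 1 := by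
  simp only [Equiv.swap_apply_def, Fin.ext_iff]
  split_ifs <;> omega

theorem AdjSwapVote.exists_lt_iff_lt {v w : Vote m} (h : AdjSwapVote v w) :
    ∃ u z : Fin m, ∀ x y, s(x, y) ≠ s(u, z) → (w x < w y ↔ v x < v y) := by
  obtain ⟨p, q, hq, rfl⟩ := h
  refine ⟨v.symm p, v.symm q, fun x y hxy => Fin.swap_lt_swap_iff hq ?_ ?_⟩ <;>
  · rintro ⟨rfl, rfl⟩
    simp at hxy

theorem AdjSwapVote.min_two_sub_le {v w : Vote m} (h : AdjSwapVote v w) (a c : Fin m) :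
    min 2 ((v a : ℕ) - v c) ≤ min 2 ((w a : ℕ) - w c) + 1 := by
  obtain ⟨p, q, hq, rfl⟩ := h
  exact Fin.min_two_sub_le_swap hq _ _

theorem AdjSwap.exists_nAbove_eq {P S : Profile m n} (h : AdjSwap P S) :
    ∃ u z : Fin m, ∀ x y, s(x, y) ≠ s(u, z) → nAbove S x y = nAbove P x y := by
  obtain ⟨i, hi, hrest⟩ := h
  obtain ⟨u, z, huz⟩ := hi.exists_lt_iff_lt
  refine ⟨u, z, fun x y hxy => congrArg Finset.card (Finset.filter_congr fun j _ => ?_)⟩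
  by_cases hj : j = i
  · subst hj; exact huz x y hxy
  · rw [hrest j hj]

theorem AdjSwap.adv_le {P S : Profile m n} (h : AdjSwap P S) (x y : Fin m) :
    adv P x y ≤ adv S x y + 2 := by
  obtain ⟨i, -, hrest⟩ := h
  simpa using adv_le_adv_add_card {i}
    (fun j hj => (hrest j (Finset.notMem_singleton.mp hj)).symm) x y

theorem AdjSwap.scQ_le {P S : Profile m n} (h : AdjSwap P S) (a : Fin m) :
    ScQ P a ≤ ScQ S a + 1 := by
  obtain ⟨u, z, huz⟩ := h.exists_nAbove_eq
  -- only the term of the alternative paired with `a` by the swap can change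
  refine Finset.sum_le_sum_add_one (if a = u then z else u) (fun b hb hb₀ => ?_) ?_
  · have hba : b ≠ a := (Finset.mem_filter.mp hb).2
    have hne : ∀ x y, s(x, y) = s(b, a) → s(x, y) ≠ s(u, z) := by
      rintro x y hxy h
      rw [hxy, Sym2.eq_iff] at h
      split_ifs at hb₀ <;> grind
    rw [adv, adv, huz b a (hne b a rfl), huz a b (hne a b Sym2.eq_swap)]
  · have := h.adv_le (if a = u then z else u) a
    omega

theorem AdjSwap.sum_min_two_sub_le {P S : Profile m n} (h : AdjSwap P S) (a c : Fin m) :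
    ∑ i, min 2 ((P i a : ℕ) - P i c) ≤ ∑ i, min 2 ((S i a : ℕ) - S i c) + 1 := by
  obtain ⟨i, hi, hrest⟩ := h
  exact Finset.sum_le_sum_add_one i (fun j _ hj => by rw [hrest j hj]) (hi.min_two_sub_le a c)

theorem reach_update {P : Profile m n} {i : Fin n} {k : ℕ} {w : Vote m}
    (h : Reach AdjSwapVote k (P i) w) : Reach AdjSwap k P (Function.update P i w) := by
  induction k generalizing P with
  | zero => cases h; simp [Reach]
  | succ k ih =>
    obtain ⟨v, hv, hvw⟩ := h
    refine ⟨Function.update P i v, ⟨i, by simpa using hv, fun j hj => ?_⟩, ?_⟩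
    · exact Function.update_of_ne hj _ _
    · simpa using ih (P := Function.update P i v) (by simpa using hvw)

theorem reach_of_forall_mem (s : Finset (Fin n)) (k : Fin n → ℕ) {P Q : Profile m n}
    (hs : ∀ i ∈ s, Reach AdjSwapVote (k i) (P i) (Q i)) (hQ : ∀ i ∉ s, Q i = P i) :
    Reach AdjSwap (∑ i ∈ s, k i) P Q := by
  induction s using Finset.induction_on generalizing P with
  | empty => exact funext fun i => (hQ i (Finset.notMem_empty i)).symm
  | insert j s hj ih =>
    rw [Finset.sum_insert hj]
    refine (reach_update (hs j (Finset.mem_insert_self j s))).trans (ih (fun i hi => ?_) ?_)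
    · rw [Function.update_of_ne (ne_of_mem_of_not_mem hi hj)]
      exact hs i (Finset.mem_insert_of_mem hi)
    · intro i hi
      by_cases hij : i = j
      · subst hij; simp
      · rw [Function.update_of_ne hij]
        exact hQ i (by simp [hij, hi])

theorem Vote.exists_reach_apply_eq_zero (v : Vote m) (a : Fin m) :
    ∃ w, Reach AdjSwapVote (v a) v w ∧ (w a : ℕ) = 0 := by
  generalize hl : (v a : ℕ) = l
  induction l generalizing v with
  | zero => exact ⟨v, rfl, hl⟩
  | succ l ih =>
    have hlm : l < m := by omega
    obtain ⟨w, hw, hwa⟩ := ih (v.trans (Equiv.swap ⟨l, hlm⟩ (v a))) (by simp)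
    exact ⟨w, ⟨_, ⟨⟨l, hlm⟩, v a, hl, rfl⟩, hw⟩, hwa⟩

end AdjacentSwaps

section DodgsonScore

variable {m n : ℕ}

theorem condorcetTieWinner_of_forall_apply_eq_zero {Q : Profile m n} {a : Fin m}
    (h : ∀ i, (Q i a : ℕ) = 0) : CondorcetTieWinner Q a := by
  intro b _
  have : nAbove Q b a = 0 :=
    Finset.card_eq_zero.mpr (Finset.filter_eq_empty_iff.mpr fun i _ => by simp [Fin.lt_def, h i])
  simp [adv, this]

theorem exists_reach_condorcetTieWinner (P : Profile m n) (a : Fin m) :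
    ∃ k Q, Reach AdjSwap k P Q ∧ CondorcetTieWinner Q a := by
  choose w hw hwa using fun i => (P i).exists_reach_apply_eq_zero a
  exact ⟨_, w, reach_of_forall_mem Finset.univ _ (fun i _ => hw i) (by simp),
    condorcetTieWinner_of_forall_apply_eq_zero hwa⟩

theorem exists_reach_scD (P : Profile m n) (a : Fin m) :
    ∃ Q, Reach AdjSwap (ScD P a) P Q ∧ CondorcetTieWinner Q a :=
  Nat.sInf_mem (exists_reach_condorcetTieWinner P a)

theorem scD_le_of_reach {P Q : Profile m n} {a : Fin m} {k : ℕ} (h : Reach AdjSwap k P Q)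
    (hQ : CondorcetTieWinner Q a) : ScD P a ≤ k :=
  Nat.sInf_le ⟨Q, h, hQ⟩

theorem scQ_le_scD (P : Profile m n) (a : Fin m) : ScQ P a ≤ ScD P a := by
  obtain ⟨Q, hPQ, hQ⟩ := exists_reach_scD P a
  have hQ0 : ScQ Q a = 0 :=
    Finset.sum_eq_zero fun b hb => by rw [hQ b (Finset.mem_filter.mp hb).2]; rfl
  simpa [hQ0] using hPQ.le_add fun _ _ h => h.scQ_le a

/-- The potential `min 2 (pos a - pos c)` of a vote changes by at most one per adjacent swap, and
once `c` does not beat `a` its total is at most `2 n_{ca} ≤ n`. -/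
theorem sum_min_two_sub_le_scD_add (P : Profile m n) {a c : Fin m} (hac : a ≠ c) :
    ∑ i, min 2 ((P i a : ℕ) - P i c) ≤ ScD P a + n := by
  obtain ⟨Q, hPQ, hQ⟩ := exists_reach_scD P a
  have hQsum : ∑ i, min 2 ((Q i a : ℕ) - Q i c) ≤ 2 * nAbove Q c a := by
    rw [nAbove_eq_sum, Finset.mul_sum]
    refine Finset.sum_le_sum fun i _ => ?_
    split_ifs with h <;> simp only [Fin.lt_def, not_lt] at h <;> omega
  have hca : nAbove Q c a ≤ nAbove Q a c := Nat.sub_eq_zero_iff_le.mp (hQ c hac.symm)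
  have := nAbove_add_nAbove Q hac
  have := hPQ.le_add fun _ _ h => h.sum_min_two_sub_le a c
  omega

end DodgsonScore

theorem sum_Pt (t : ℕ) (f : Vote 4 → ℕ) :
    ∑ i, f (Pt t i) = 32 * t * f vof1 + 24 * t * f vof2 + 20 * t * f vof3 + 2 * t * f vof4 := by
  let g : ℕ → Vote 4 := fun j =>
    if j < 32 * t then vof1 else if j < 56 * t then vof2 else if j < 76 * t then vof3 else vof4
  have hblock : ∀ (a l : ℕ) (v : Vote 4), (∀ j, a ≤ j → j < a + l → g j = v) →
      ∑ j ∈ Finset.range l, f (g (a + j)) = l * f v := fun a l v hg => by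
    rw [Finset.sum_congr rfl fun j hj => by rw [hg (a + j) (by omega) (by simpa using hj)]]
    simp
  refine (Fin.sum_univ_eq_sum_range (fun j => f (g j)) (78 * t)).trans ?_
  rw [show 78 * t = 32 * t + (24 * t + (20 * t + 2 * t)) by ring, Finset.sum_range_add,
    Finset.sum_range_add, Finset.sum_range_add]
  simp only [← add_assoc]
  rw [← hblock 0 _ vof1 ?_, hblock _ _ vof2 ?_, hblock _ _ vof3 ?_, hblock _ _ vof4 ?_]
  · simp
  all_goals intro j _ _; simp only [g]; split_ifs <;> first | rfl | omega

theorem nAbove_Pt (t : ℕ) (x y : Fin 4) :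
    nAbove (Pt t) x y = 32 * t * (if vof1 x < vof1 y then 1 else 0) +
      24 * t * (if vof2 x < vof2 y then 1 else 0) + 20 * t * (if vof3 x < vof3 y then 1 else 0) +
      2 * t * (if vof4 x < vof4 y then 1 else 0) :=
  (nAbove_eq_sum _ x y).trans (sum_Pt t fun v => if v x < v y then 1 else 0)

theorem scQ_Pt (t : ℕ) : ScQ (Pt t) = ![12 * t, 17 * t, 13 * t, 54 * t] := by
  funext a
  fin_cases a <;> simp +decide [ScQ, adv, nAbove_Pt, Finset.sum_filter, Fin.sum_univ_four] <;> omega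

/-- Swapping `b` and `c` in `13t + k` of the unchanged votes `a > b > c > x` makes `c` a
Condorcet-tie winner. -/
theorem scD_Pt_two_le (t : ℕ) {R : Profile 4 (78 * t)} (W : Finset (Fin (78 * t)))
    (hW : ∀ i ∉ W, R i = Pt t i) (hk : W.card ≤ 7 * t) : ScD R 2 ≤ 13 * t + W.card := by
  set S := (Finset.univ.filter fun i => Pt t i = vof1) \ W
  have hS : ∀ i ∈ S, R i = vof1 := fun i hi => by
    obtain ⟨hi, hiW⟩ := Finset.mem_sdiff.mp hi
    rw [hW i hiW, (Finset.mem_filter.mp hi).2]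
  have hScard : 13 * t + W.card ≤ S.card := by
    have h32 : (Finset.univ.filter fun i => Pt t i = vof1).card = 32 * t := by
      rw [Finset.card_filter, sum_Pt t fun v => if v = vof1 then 1 else 0]
      simp +decide
    calc 13 * t + W.card ≤ 32 * t - W.card := by omega
      _ ≤ S.card := h32 ▸ Finset.le_card_sdiff W _
  obtain ⟨F, hFS, hFcard⟩ := Finset.exists_subset_card_eq hScard
  set Q : Profile 4 (78 * t) := fun i => if i ∈ F then vof1.trans (Equiv.swap 1 2) else R i
  have hRQ : Reach AdjSwap (13 * t + W.card) R Q := by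
    simpa [hFcard] using reach_of_forall_mem F (fun _ => 1) (P := R) (Q := Q)
      (fun i hi => ⟨Q i, ⟨1, 2, rfl, by simp [Q, hi, hS i (hFS hi)]⟩, rfl⟩)
      (fun i hi => by simp [Q, hi])
  have hn := nAbove_add_card_mul (Q := Q) (w := vof1.trans (Equiv.swap 1 2)) F
    (fun i hi => hS i (hFS hi)) (fun i hi => by simp [Q, hi]) (fun i hi => by simp [Q, hi])
  refine scD_le_of_reach hRQ fun b hb => Nat.sub_eq_zero_of_le ?_
  have h₁ := hn b 2
  have h₂ := hn 2 b
  have h₃ := nAbove_le_nAbove_add_card W hW b 2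
  have h₄ := nAbove_le_nAbove_add_card W (fun i hi => (hW i hi).symm) 2 b
  rw [nAbove_Pt] at h₃ h₄
  fin_cases b <;> simp +decide [hFcard] at h₁ h₂ h₃ h₄ hb ⊢ <;> omega

theorem le_scD_Pt_zero_add (t : ℕ) {R : Profile 4 (78 * t)} (W : Finset (Fin (78 * t)))
    (hW : ∀ i ∉ W, R i = Pt t i) : 14 * t ≤ ScD R 0 + 2 * W.card := by
  have hPt : ∑ i, min 2 ((Pt t i 0 : ℕ) - Pt t i 2) = 92 * t := by
    have hv : ([vof1, vof2, vof3, vof4].map fun v : Vote 4 => min 2 ((v 0 : ℕ) - v 2)) =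
        [0, 2, 2, 2] := by decide
    simp only [List.map_cons, List.map_nil, List.cons.injEq] at hv
    obtain ⟨h₁, h₂, h₃, h₄, -⟩ := hv
    rw [sum_Pt t fun v => min 2 ((v 0 : ℕ) - v 2), h₁, h₂, h₃, h₄]
    ring
  have := Finset.sum_le_sum_add_card_mul (f := fun i => min 2 ((Pt t i 0 : ℕ) - Pt t i 2))
    (g := fun i => min 2 ((R i 0 : ℕ) - R i 2)) (fun i => min_le_left _ _) W
    (fun i hi => by simp only [hW i hi])
  have := sum_min_two_sub_le_scD_add R (a := 0) (c := 2) (by decide)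
  omega

theorem setOf_forall_le_ne {α : Type*} {f g : α → ℕ} {a c : α} (hac : a ≠ c)
    (hf : ∀ y, y ≠ a → f a < f y) (hg : ∀ y, y ≠ c → g c < g y) :
    {y | ∀ b, f y ≤ f b} ≠ {y | ∀ b, g y ≤ g b} := by
  intro h
  have ha : a ∈ {y | ∀ b, g y ≤ g b} :=
    h ▸ fun b => (eq_or_ne b a).elim (fun hb => hb ▸ le_rfl) fun hb => (hf b hb).le
  exact (hg a hac).not_ge (ha c)

theorem stmt_15_general (t : ℕ) (R : Profile 4 (78 * t))
    (hR : 6 * (Finset.univ.filter (fun i => R i ≠ Pt t i)).card < t) :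
    (∀ y : Fin 4, y ≠ 0 → ScQ R 0 < ScQ R y) ∧
    (∀ y : Fin 4, y ≠ 2 → ScD R 2 < ScD R y) ∧
    {y : Fin 4 | ∀ b, ScQ R y ≤ ScQ R b} ≠ {y : Fin 4 | ∀ b, ScD R y ≤ ScD R b} := by
  set W := Finset.univ.filter fun i => R i ≠ Pt t i
  have hW : ∀ i ∉ W, R i = Pt t i := fun i hi => by simpa [W] using hi
  have hQup := scQ_le_scQ_add_card W hW
  have hQlo := scQ_le_scQ_add_card W fun i hi => (hW i hi).symm
  have hD₂ := scD_Pt_two_le t W hW (by omega)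
  have hD₀ := le_scD_Pt_zero_add t W hW
  have hQD := scQ_le_scD R
  simp only [scQ_Pt] at hQup hQlo
  have hQ : ∀ y : Fin 4, y ≠ 0 → ScQ R 0 < ScQ R y := by
    intro y hy
    have h₀ := hQup 0
    have hy' := hQlo y
    fin_cases y <;> simp at hy h₀ hy' ⊢ <;> omega
  have hD : ∀ y : Fin 4, y ≠ 2 → ScD R 2 < ScD R y := by
    intro y hy
    have hy' := hQlo y
    have hyD := hQD y
    fin_cases y <;> simp at hy hy' hyD ⊢ <;> omega
  exact ⟨hQ, hD, setOf_forall_le_ne (by decide) hQ hD⟩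

/-- If `R` is obtained from `P_t` by changing fewer than `t/6` of the votes, then
`a = 0` is the unique DQ winner of `R` and `c = 2` is the unique Dodgson winner
of `R`; in particular the set of DQ winners of `R` differs from the set of
Dodgson winners of `R`. -/
theorem stmt_15 (t : ℕ) (ht : 1 ≤ t) (R : Profile 4 (78 * t))
    (hR : 6 * (Finset.univ.filter (fun i => R i ≠ Pt t i)).card < t) :
    (∀ y : Fin 4, y ≠ 0 → ScQ R 0 < ScQ R y) ∧
    (∀ y : Fin 4, y ≠ 2 → ScD R 2 < ScD R y) ∧
    {y : Fin 4 | ∀ b, ScQ R y ≤ ScQ R b} ≠ {y : Fin 4 | ∀ b, ScD R y ≤ ScD R b} :=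
  stmt_15_general t R hR
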